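/- If X_1, ..., X_n are as follows: X_i ∈ H_i, X_i is independent of F_{i-1}, each X_i lower bounded or in L_b¹, and E(X_i) = 0 for all i, then the partial sums S_j = X_1 + ... + X_j form an SL-martingale: E_n(S_m) = S_n for all n ≤ m. -/

import Mathlib

open MeasureTheory Filter Set

/-- An `F_t`-consistent sublinear expectation (`SL`-expectation) in discrete time:
a filtration `F t` of sub-σ-algebras, a space `H` of measurable real functions closed
under constants, `|·|`, addition, scalar multiplication and multiplication by indicators,
and conditional expectations `Et t : H → H ∩ mF_t` satisfying monotonicity, the tower
property, locality, projection, sub-additivity, positive homogeneity and the monotone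
continuity (Fatou) property.  `E := Et 0` is identified with a real-valued functional. -/
structure CondSLExp (Ω : Type*) [m : MeasurableSpace Ω] where
  F : ℕ → MeasurableSpace Ω
  F_le : ∀ t, F t ≤ m
  F_mono : Monotone F
  H : Set (Ω → ℝ)
  H_meas : ∀ X ∈ H, Measurable X
  const_mem : ∀ c : ℝ, (fun _ => c) ∈ H
  abs_mem : ∀ X ∈ H, (fun ω => |X ω|) ∈ H
  add_mem : ∀ X ∈ H, ∀ Y ∈ H, X + Y ∈ H
  smul_mem : ∀ (c : ℝ), ∀ X ∈ H, c • X ∈ H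
  indmul_mem : ∀ (A : Set Ω), MeasurableSet A → ∀ X ∈ H, A.indicator X ∈ H
  Et : ℕ → (Ω → ℝ) → (Ω → ℝ)
  E : (Ω → ℝ) → ℝ
  E0_eq : ∀ X ∈ H, ∀ ω, Et 0 X ω = E X
  Et_mem : ∀ t, ∀ X ∈ H, Et t X ∈ H
  Et_meas : ∀ t, ∀ X ∈ H, Measurable[F t] (Et t X)
  mono : ∀ t, ∀ X ∈ H, ∀ Y ∈ H, (∀ ω, X ω ≤ Y ω) → ∀ ω, Et t X ω ≤ Et t Y ω
  tower : ∀ s t : ℕ, s ≤ t → ∀ Y ∈ H, Et s (Et t Y) = Et s Y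
  locality : ∀ (t : ℕ) (A : Set Ω), MeasurableSet[F t] A → ∀ Y ∈ H,
      Et t (A.indicator Y) = A.indicator (Et t Y)
  proj : ∀ t, ∀ Y ∈ H, Measurable[F t] Y → Et t Y = Y
  subadd : ∀ t, ∀ X ∈ H, ∀ Y ∈ H, ∀ ω, Et t (X + Y) ω ≤ Et t X ω + Et t Y ω
  poshom : ∀ (t : ℕ) (lam : Ω → ℝ), lam ∈ H → Measurable[F t] lam → ∀ Y ∈ H,
      (fun ω => lam ω * Y ω) ∈ H →
      ∀ ω, Et t (fun ω' => lam ω' * Y ω') ω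
        = max (lam ω) 0 * Et t Y ω + max (-(lam ω)) 0 * Et t (fun ω' => -(Y ω')) ω
  fatou : ∀ X : ℕ → Ω → ℝ, (∀ i, X i ∈ H) → (∀ ω, Antitone fun i => X i ω) →
      (∀ ω, Tendsto (fun i => X i ω) atTop (nhds 0)) →
      Tendsto (fun i => E (X i)) atTop (nhds 0)

variable {Ω : Type*} [MeasurableSpace Ω]

/-- The upper capacity `V(A) := E(I_A)`. -/
noncomputable def CondSLExp.V (S : CondSLExp Ω) (A : Set Ω) : ℝ :=
  S.E (A.indicator fun _ => (1 : ℝ))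

/-- A property holds quasi-surely if it holds outside a set `N` with `E(I_N) = 0`. -/
def CondSLExp.QS (S : CondSLExp Ω) (P : Ω → Prop) : Prop :=
  ∃ N : Set Ω, S.V N = 0 ∧ ∀ ω ∉ N, P ω

/-- `X` is independent of `F n`: `X` is independent of `I_A` under `E` for every
`A ∈ F n`, i.e. `E(φ(I_A, X)) = E(φ̄(I_A))` where `φ̄(x) := E(φ(x, X))`. -/
def CondSLExp.IndepOf (S : CondSLExp Ω) (X : Ω → ℝ) (n : ℕ) : Prop :=
  ∀ A : Set Ω, MeasurableSet[S.F n] A → ∀ φ : ℝ → ℝ → ℝ,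
    (fun ω => φ (A.indicator (fun _ => (1 : ℝ)) ω) (X ω)) ∈ S.H →
    (∀ x : ℝ, (fun ω => φ x (X ω)) ∈ S.H) →
    (fun ω => S.E fun ω' => φ (A.indicator (fun _ => (1 : ℝ)) ω) (X ω')) ∈ S.H →
    S.E (fun ω => φ (A.indicator (fun _ => (1 : ℝ)) ω) (X ω)) =
      S.E (fun ω => S.E fun ω' => φ (A.indicator (fun _ => (1 : ℝ)) ω) (X ω'))

/-- Membership in `L_b¹`, via the characterization
`L_b¹ = {X ∈ L¹ : lim_n E(|X| I_{|X|>n}) = 0}`. -/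
def CondSLExp.InLb1 (S : CondSLExp Ω) (X : Ω → ℝ) : Prop :=
  Tendsto (fun n : ℕ => S.E fun ω => if (n : ℝ) < |X ω| then |X ω| else 0)
    atTop (nhds 0)

/-!
Write `W_i := E_{i-1}(X_i)`. Independence of `X_i` from `F_{i-1}` gives
`E(I_C (X_i + c)) = E((E X_i + c) I_C)` for `C ∈ F_{i-1}`, and the left side equals
`E(I_C (W_i + c))` by the tower property and locality. With `C = {W_i > δ}` this yields
`E(W_i⁺) = 0`; with `C = {W_i < -δ}` it yields `V(W_i < -δ) = 0`, which the lower bound of `X_i`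
(a constant, or the `L_b¹` truncation `|X_i| I_{|X_i| > k}`) turns into `E(W_i⁻) = 0`.
Sub-additivity and the tower property bound `|E_n(S_m) - S_n|` by `∑_{n<i≤m} E_n|W_i|`, a
nonnegative element of expectation `0`, which vanishes quasi-surely by the monotone continuity
of `E`.
-/

namespace CondSLExp

variable (S : CondSLExp Ω)

lemma neg_mem {Y : Ω → ℝ} (hY : Y ∈ S.H) : -Y ∈ S.H := by
  simpa using S.smul_mem (-1) Y hY

lemma add_const_mem {Y : Ω → ℝ} (hY : Y ∈ S.H) (c : ℝ) : (fun ω => Y ω + c) ∈ S.H :=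
  S.add_mem Y hY _ (S.const_mem c)

lemma indicator_one_mem {A : Set Ω} (hA : MeasurableSet A) :
    (A.indicator fun _ => (1 : ℝ)) ∈ S.H :=
  S.indmul_mem A hA _ (S.const_mem 1)

lemma posPart_mem {Y : Ω → ℝ} (hY : Y ∈ S.H) : (fun ω => max (Y ω) 0) ∈ S.H := by
  have h : (fun ω => max (Y ω) 0) = (1 / 2 : ℝ) • (Y + fun ω => |Y ω|) := by
    funext ω
    rcases le_total 0 (Y ω) with h | h
    · simp [abs_of_nonneg h, h]; ring
    · simp [abs_of_nonpos h, h]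
  rw [h]
  exact S.smul_mem _ _ (S.add_mem Y hY _ (S.abs_mem Y hY))

lemma sum_mem {s : Finset ℕ} {Y : ℕ → Ω → ℝ} (hY : ∀ i ∈ s, Y i ∈ S.H) :
    (fun ω => ∑ i ∈ s, Y i ω) ∈ S.H := by
  classical
  induction s using Finset.induction with
  | empty => simpa using S.const_mem 0
  | insert a s ha ih =>
    simp_rw [Finset.sum_insert ha]
    exact S.add_mem _ (hY a (s.mem_insert_self a)) _
      (ih fun i hi => hY i (Finset.mem_insert_of_mem hi))

lemma Et_const (t : ℕ) (c : ℝ) : S.Et t (fun _ => c) = fun _ => c :=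
  S.proj t _ (S.const_mem c) measurable_const

lemma Et_nonneg (t : ℕ) {Y : Ω → ℝ} (hY : Y ∈ S.H) (h : ∀ ω, 0 ≤ Y ω) (ω : Ω) :
    0 ≤ S.Et t Y ω := by
  simpa [S.Et_const] using S.mono t _ (S.const_mem 0) Y hY h ω

lemma Et_le_Et_add_add_Et_neg (t : ℕ) {Y Z : Ω → ℝ} (hY : Y ∈ S.H) (hZ : Z ∈ S.H)
    (ω : Ω) :
    S.Et t Y ω ≤ S.Et t (Y + Z) ω + S.Et t (-Z) ω := by
  simpa using S.subadd t (Y + Z) (S.add_mem Y hY Z hZ) (-Z) (S.neg_mem hZ) ω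

lemma neg_Et_le_Et_neg (t : ℕ) {Y : Ω → ℝ} (hY : Y ∈ S.H) (ω : Ω) :
    -S.Et t Y ω ≤ S.Et t (-Y) ω := by
  have h := S.subadd t (-Y) (S.neg_mem hY) Y hY ω
  have h0 : S.Et t 0 ω = 0 := congrFun (S.Et_const t 0) ω
  rw [neg_add_cancel, h0] at h
  linarith

lemma Et_add_of_measurable (t : ℕ) {Y Z : Ω → ℝ} (hY : Y ∈ S.H) (hZ : Z ∈ S.H)
    (hZm : Measurable[S.F t] Z) : S.Et t (Y + Z) = S.Et t Y + Z := by
  funext ω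
  have hle := S.subadd t Y hY Z hZ ω
  have hge := S.Et_le_Et_add_add_Et_neg t hY hZ ω
  rw [S.proj t Z hZ hZm] at hle
  rw [S.proj t _ (S.neg_mem hZ) hZm.neg] at hge
  simp only [Pi.add_apply, Pi.neg_apply] at hle hge ⊢
  linarith

lemma Et_add_const (t : ℕ) {Y : Ω → ℝ} (hY : Y ∈ S.H) (c : ℝ) :
    S.Et t (fun ω => Y ω + c) = fun ω => S.Et t Y ω + c :=
  S.Et_add_of_measurable t hY (S.const_mem c) measurable_const

lemma abs_Et_add_sub_Et_le (t : ℕ) {Y Z : Ω → ℝ} (hY : Y ∈ S.H) (hZ : Z ∈ S.H)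
    (ω : Ω) :
    |S.Et t (Y + Z) ω - S.Et t Z ω| ≤ S.Et t (fun ω => |Y ω|) ω := by
  have habs := S.mono t Y hY _ (S.abs_mem Y hY) (fun ω => le_abs_self (Y ω)) ω
  have habs' := S.mono t (-Y) (S.neg_mem hY) _ (S.abs_mem Y hY) (fun ω => neg_le_abs (Y ω)) ω
  have hle := S.subadd t Y hY Z hZ ω
  have hge := S.Et_le_Et_add_add_Et_neg t hZ hY ω
  rw [add_comm Z Y] at hge
  rw [abs_le]
  constructor <;> linarith

lemma abs_Et_sub_le_sum {Y D : ℕ → Ω → ℝ} (hY : ∀ k, Y k ∈ S.H)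
    (hYm : ∀ k, Measurable[S.F k] (Y k)) (hD : ∀ k, D (k + 1) ∈ S.H)
    (hYD : ∀ k, Y (k + 1) = D (k + 1) + Y k) {n m : ℕ} (hnm : n ≤ m) (ω : Ω) :
    |S.Et n (Y m) ω - Y n ω| ≤
      ∑ k ∈ Finset.Ico n m, S.Et n (fun ω => |S.Et k (D (k + 1)) ω|) ω := by
  induction m, hnm using Nat.le_induction with
  | base => simp [S.proj n _ (hY n) (hYm n)]
  | succ m hnm ih =>
    have hstep : S.Et n (Y (m + 1)) = S.Et n (S.Et m (D (m + 1)) + Y m) := by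
      rw [← S.tower n m hnm _ (hY _), hYD, S.Et_add_of_measurable m (hD m) (hY m) (hYm m)]
    have hinc := S.abs_Et_add_sub_Et_le n (S.Et_mem m _ (hD m)) (hY m) ω
    rw [Finset.sum_Ico_succ_top hnm, hstep]
    calc |S.Et n (S.Et m (D (m + 1)) + Y m) ω - Y n ω|
        ≤ |S.Et n (S.Et m (D (m + 1)) + Y m) ω - S.Et n (Y m) ω|
            + |S.Et n (Y m) ω - Y n ω| := abs_sub_le _ _ _
      _ ≤ _ := by linarith

lemma E_zero : S.E (fun _ => 0) = 0 :=
  tendsto_nhds_unique tendsto_const_nhds <|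
    S.fatou _ (fun _ => S.const_mem 0) (fun _ => antitone_const) (fun _ => tendsto_const_nhds)

lemma qs_of_forall {P : Ω → Prop} (h : ∀ ω, P ω) : S.QS P :=
  ⟨∅, by simpa [V] using S.E_zero, fun ω _ => h ω⟩

lemma QS.mono {S : CondSLExp Ω} {P Q : Ω → Prop} (hP : S.QS P) (hPQ : ∀ ω, P ω → Q ω) :
    S.QS Q :=
  let ⟨N, hN, hPN⟩ := hP
  ⟨N, hN, fun ω hω => hPQ ω (hPN ω hω)⟩

section Nonempty

variable [Nonempty Ω]

lemma E_mono {Y Z : Ω → ℝ} (hY : Y ∈ S.H) (hZ : Z ∈ S.H) (h : ∀ ω, Y ω ≤ Z ω) :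
    S.E Y ≤ S.E Z := by
  rw [← S.E0_eq Y hY (Classical.arbitrary Ω), ← S.E0_eq Z hZ (Classical.arbitrary Ω)]
  exact S.mono 0 Y hY Z hZ h _

lemma E_nonneg {Y : Ω → ℝ} (hY : Y ∈ S.H) (h : ∀ ω, 0 ≤ Y ω) : 0 ≤ S.E Y :=
  S.E_zero ▸ S.E_mono (S.const_mem 0) hY h

lemma E_nonpos {Y : Ω → ℝ} (hY : Y ∈ S.H) (h : ∀ ω, Y ω ≤ 0) : S.E Y ≤ 0 :=
  S.E_zero ▸ S.E_mono hY (S.const_mem 0) h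

lemma E_add_le {Y Z : Ω → ℝ} (hY : Y ∈ S.H) (hZ : Z ∈ S.H) :
    S.E (Y + Z) ≤ S.E Y + S.E Z := by
  rw [← S.E0_eq _ (S.add_mem Y hY Z hZ) (Classical.arbitrary Ω),
    ← S.E0_eq Y hY (Classical.arbitrary Ω), ← S.E0_eq Z hZ (Classical.arbitrary Ω)]
  exact S.subadd 0 Y hY Z hZ _

lemma E_add_const {Y : Ω → ℝ} (hY : Y ∈ S.H) (c : ℝ) :
    S.E (fun ω => Y ω + c) = S.E Y + c := by
  rw [← S.E0_eq _ (S.add_const_mem hY c) (Classical.arbitrary Ω),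
    ← S.E0_eq Y hY (Classical.arbitrary Ω), S.Et_add_const 0 hY c]

lemma E_smul {Y : Ω → ℝ} (hY : Y ∈ S.H) {c : ℝ} (hc : 0 ≤ c) :
    S.E (c • Y) = c * S.E Y := by
  have h := S.poshom 0 (fun _ => c) (S.const_mem c) measurable_const Y hY
    (S.smul_mem c Y hY) (Classical.arbitrary Ω)
  rw [max_eq_left hc, max_eq_right (neg_nonpos.mpr hc), zero_mul, add_zero] at h
  rw [← S.E0_eq _ (S.smul_mem c Y hY) (Classical.arbitrary Ω),
    ← S.E0_eq Y hY (Classical.arbitrary Ω), ← h]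
  rfl

lemma E_Et (t : ℕ) {Y : Ω → ℝ} (hY : Y ∈ S.H) : S.E (S.Et t Y) = S.E Y := by
  rw [← S.E0_eq _ (S.Et_mem t Y hY) (Classical.arbitrary Ω),
    ← S.E0_eq Y hY (Classical.arbitrary Ω), S.tower 0 t t.zero_le Y hY]

lemma E_sum_le {s : Finset ℕ} {Y : ℕ → Ω → ℝ} (hY : ∀ i ∈ s, Y i ∈ S.H) :
    S.E (fun ω => ∑ i ∈ s, Y i ω) ≤ ∑ i ∈ s, S.E (Y i) := by
  classical
  induction s using Finset.induction with
  | empty => simp [S.E_zero]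
  | insert a s ha ih =>
    have hYs : ∀ i ∈ s, Y i ∈ S.H := fun i hi => hY i (Finset.mem_insert_of_mem hi)
    simp_rw [Finset.sum_insert ha]
    calc S.E (Y a + fun ω => ∑ i ∈ s, Y i ω)
        ≤ S.E (Y a) + S.E (fun ω => ∑ i ∈ s, Y i ω) :=
          S.E_add_le (hY a (s.mem_insert_self a)) (S.sum_mem hYs)
      _ ≤ S.E (Y a) + ∑ i ∈ s, S.E (Y i) := by linarith [ih hYs]

lemma E_smul_indicator_one {A : Set Ω} (hA : MeasurableSet A) {c : ℝ} (hc : 0 ≤ c) :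
    S.E (c • A.indicator fun _ => 1) = c * S.V A :=
  S.E_smul (S.indicator_one_mem hA) hc

lemma V_nonneg {A : Set Ω} (hA : MeasurableSet A) : 0 ≤ S.V A :=
  S.E_nonneg (S.indicator_one_mem hA) fun _ => Set.indicator_nonneg (fun _ _ => zero_le_one) _

/-- `(I_{g>0} - k g)⁺` decreases to `0` and dominates `I_{g>0} - k g`, so the monotone
continuity of `E` forces `V(g > 0) = 0`. -/
lemma qs_nonpos_of_E_nonpos {g : Ω → ℝ} (hg : g ∈ S.H) (hg0 : ∀ ω, 0 ≤ g ω)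
    (hE : S.E g ≤ 0) : S.QS fun ω => g ω ≤ 0 := by
  set A := {ω | 0 < g ω}
  have hA : MeasurableSet A := measurableSet_lt measurable_const (S.H_meas g hg)
  set I := A.indicator fun _ => (1 : ℝ)
  have hI := S.indicator_one_mem hA
  set Z : ℕ → Ω → ℝ := fun k ω => max (I ω - k * g ω) 0
  have hZ : ∀ k, Z k ∈ S.H := fun k =>
    S.posPart_mem <| by
      convert S.add_mem I hI _ (S.smul_mem (-k) g hg) using 1
      funext ω; simp [sub_eq_add_neg]
  have hZanti : ∀ ω, Antitone fun k => Z k ω := fun ω k l hkl => by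
    have : (k : ℝ) * g ω ≤ l * g ω := by gcongr; exact hg0 ω
    exact max_le_max (by linarith) le_rfl
  have hZlim : ∀ ω, Tendsto (fun k => Z k ω) atTop (nhds 0) := by
    intro ω
    apply tendsto_atTop_of_eventually_const (i₀ := ⌈(g ω)⁻¹⌉₊)
    intro k hk
    by_cases hω : 0 < g ω
    · have : (g ω)⁻¹ ≤ k := (Nat.ceil_le.mp hk)
      have : 1 ≤ k * g ω := by rwa [inv_le_iff_one_le_mul₀ hω] at this
      simp only [Z, I, Set.indicator_of_mem (show ω ∈ A from hω)]
      exact max_eq_right (by linarith)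
    · simp [Z, I, A, le_antisymm (not_lt.mp hω) (hg0 ω)]
  have hVle : ∀ k : ℕ, S.V A ≤ S.E (Z k) := fun k => by
    calc S.V A ≤ S.E (Z k + (k : ℝ) • g) :=
          S.E_mono hI (S.add_mem _ (hZ k) _ (S.smul_mem _ g hg)) fun ω => by
            simp only [Pi.add_apply, Pi.smul_apply, smul_eq_mul, Z]
            linarith [le_max_left (I ω - k * g ω) 0]
      _ ≤ S.E (Z k) + k * S.E g := by
          rw [← S.E_smul hg k.cast_nonneg]; exact S.E_add_le (hZ k) (S.smul_mem _ g hg)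
      _ ≤ S.E (Z k) := by nlinarith [(k.cast_nonneg : (0 : ℝ) ≤ k)]
  have hV : S.V A = 0 := le_antisymm
    (ge_of_tendsto (S.fatou Z hZ hZanti hZlim) (Eventually.of_forall hVle)) (S.V_nonneg hA)
  exact ⟨A, hV, fun ω hω => not_lt.mp hω⟩

lemma E_indicator_Et (t : ℕ) {C : Set Ω} (hC : MeasurableSet[S.F t] C) {Y : Ω → ℝ}
    (hY : Y ∈ S.H) : S.E (C.indicator (S.Et t Y)) = S.E (C.indicator Y) := by
  rw [← S.locality t C hC Y hY, S.E_Et t (S.indmul_mem C (S.F_le t C hC) Y hY)]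

/-- Independence applied to `φ(x, y) = x (y + c)`. -/
lemma E_indicator_add_const_of_indepOf {X : Ω → ℝ} (hX : X ∈ S.H) {t : ℕ}
    (hI : S.IndepOf X t) {C : Set Ω} (hC : MeasurableSet[S.F t] C) (c : ℝ) :
    S.E (C.indicator fun ω => X ω + c) = S.E ((S.E X + c) • C.indicator fun _ => 1) := by
  have hCm := S.F_le t C hC
  have hXc := S.add_const_mem hX c
  have hlhs : (fun ω => C.indicator (fun _ => (1 : ℝ)) ω * (X ω + c)) =
      C.indicator fun ω => X ω + c := by
    funext ω; by_cases hω : ω ∈ C <;> simp [hω]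
  have hrhs : (fun ω => S.E fun ω' => C.indicator (fun _ => (1 : ℝ)) ω * (X ω' + c)) =
      (S.E X + c) • C.indicator fun _ => 1 := by
    funext ω
    by_cases hω : ω ∈ C
    · simp [hω, S.E_add_const hX c]
    · simp [hω, S.E_zero]
  have h := hI C hC (fun x y => x * (y + c)) (by simpa [hlhs] using S.indmul_mem C hCm _ hXc)
    (fun x => S.smul_mem x _ hXc)
    (by simpa [hrhs] using S.smul_mem _ _ (S.indicator_one_mem hCm))
  simpa only [hlhs, hrhs] using h

lemma E_indicator_Et_add_const {X : Ω → ℝ} (hX : X ∈ S.H) {t : ℕ} (hI : S.IndepOf X t)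
    (hz : S.E X = 0) {C : Set Ω} (hC : MeasurableSet[S.F t] C) (c : ℝ) :
    S.E (C.indicator fun ω => S.Et t X ω + c) = S.E (c • C.indicator fun _ => 1) := by
  rw [← S.Et_add_const t hX c, S.E_indicator_Et t hC (S.add_const_mem hX c),
    S.E_indicator_add_const_of_indepOf hX hI hC, hz, zero_add]

lemma E_posPart_Et_le_zero {X : Ω → ℝ} (hX : X ∈ S.H) {t : ℕ} (hI : S.IndepOf X t)
    (hz : S.E X = 0) : S.E (fun ω => max (S.Et t X ω) 0) ≤ 0 := by
  set W := S.Et t X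
  have hW := S.Et_mem t X hX
  refine le_of_forall_pos_le_add fun δ hδ => ?_
  set C := {ω | δ < W ω}
  have hC : MeasurableSet[S.F t] C := measurableSet_lt measurable_const (S.Et_meas t X hX)
  have hCm := S.F_le t C hC
  calc S.E (fun ω => max (W ω) 0)
      = S.E (fun ω => max (W ω) 0 + -δ) + δ := by
        rw [S.E_add_const (S.posPart_mem hW)]; ring
    _ ≤ S.E (C.indicator fun ω => W ω + -δ) + δ := by
        gcongr
        refine S.E_mono (S.add_const_mem (S.posPart_mem hW) _)
          (S.indmul_mem C hCm _ (S.add_const_mem hW _)) fun ω => ?_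
        by_cases hω : δ < W ω
        · simp [C, hω, le_of_lt (hδ.trans hω)]
        · rw [Set.indicator_of_notMem (show ω ∉ C from hω)]
          linarith [max_le (not_lt.mp hω) hδ.le]
    _ = S.E ((-δ) • C.indicator fun _ => 1) + δ := by
        rw [S.E_indicator_Et_add_const hX hI hz hC]
    _ ≤ 0 + δ := by
        gcongr
        refine S.E_nonpos (S.smul_mem _ _ (S.indicator_one_mem hCm)) fun ω => ?_
        by_cases hω : ω ∈ C <;> simp [hω, hδ.le]

lemma V_Et_lt_neg_eq_zero {X : Ω → ℝ} (hX : X ∈ S.H) {t : ℕ} (hI : S.IndepOf X t)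
    (hz : S.E X = 0) {δ : ℝ} (hδ : 0 < δ) : S.V {ω | S.Et t X ω < -δ} = 0 := by
  set A := {ω | S.Et t X ω < -δ}
  have hA : MeasurableSet[S.F t] A := measurableSet_lt (S.Et_meas t X hX) measurable_const
  have hAm := S.F_le t A hA
  have h := S.E_indicator_Et_add_const hX hI hz hA δ
  rw [S.E_smul_indicator_one hAm hδ.le] at h
  have hle : S.E (A.indicator fun ω => S.Et t X ω + δ) ≤ 0 :=
    S.E_nonpos (S.indmul_mem A hAm _ (S.add_const_mem (S.Et_mem t X hX) δ)) fun ω => by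
      by_cases hω : ω ∈ A
      · simp only [Set.indicator_of_mem hω]; linarith [show S.Et t X ω < -δ from hω]
      · simp [hω]
  have hV : δ * S.V A ≤ 0 := h ▸ hle
  exact le_antisymm (nonpos_of_mul_nonpos_right hV hδ) (S.V_nonneg hAm)

/-- Where `E_t X < -δ` the bound `E_t X ≥ -(b + E_t G)` is only paid on a `V`-null set. -/
lemma E_negPart_Et_le {X : Ω → ℝ} (hX : X ∈ S.H) {t : ℕ} (hI : S.IndepOf X t)
    (hz : S.E X = 0) {b : ℝ} (hb : 0 ≤ b) {G : Ω → ℝ} (hG : G ∈ S.H)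
    (hG0 : ∀ ω, 0 ≤ G ω) (hXG : ∀ ω, -(b + G ω) ≤ X ω) :
    S.E (fun ω => max (-S.Et t X ω) 0) ≤ S.E G := by
  set W := S.Et t X
  have hEtG := S.Et_mem t G hG
  have hEtG0 := S.Et_nonneg t hG hG0
  have hWG : ∀ ω, -(b + S.Et t G ω) ≤ W ω := fun ω => by
    have h := S.mono t _ (S.add_const_mem (S.neg_mem hG) (-b)) X hX
      (fun ω => by simp only [Pi.neg_apply]; linarith [hXG ω]) ω
    rw [S.Et_add_const t (S.neg_mem hG)] at h
    linarith [S.neg_Et_le_Et_neg t hG ω]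
  refine le_of_forall_pos_le_add fun δ hδ => ?_
  set A := {ω | W ω < -δ}
  have hAm : MeasurableSet A :=
    S.F_le t A (measurableSet_lt (S.Et_meas t X hX) measurable_const)
  have hbA := S.smul_mem b _ (S.indicator_one_mem hAm)
  have hV : S.V A = 0 := S.V_Et_lt_neg_eq_zero hX hI hz hδ
  calc S.E (fun ω => max (-W ω) 0)
      ≤ S.E (fun ω => ((b • A.indicator fun _ => 1) + S.Et t G : Ω → ℝ) ω + δ) := by
        refine S.E_mono (S.posPart_mem (S.neg_mem (S.Et_mem t X hX)))
          (S.add_const_mem (S.add_mem _ hbA _ hEtG) δ) fun ω => ?_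
        by_cases hω : W ω < -δ
        · simp only [Pi.add_apply, Pi.smul_apply, smul_eq_mul,
            Set.indicator_of_mem (show ω ∈ A from hω)]
          exact max_le (by linarith [hWG ω]) (by linarith [hEtG0 ω])
        · simp only [Pi.add_apply, Pi.smul_apply, smul_eq_mul,
            Set.indicator_of_notMem (show ω ∉ A from hω)]
          exact max_le (by linarith [hEtG0 ω, not_lt.mp hω]) (by linarith [hEtG0 ω])
    _ ≤ b * S.V A + S.E (S.Et t G) + δ := by
        rw [S.E_add_const (S.add_mem _ hbA _ hEtG), ← S.E_smul_indicator_one hAm hb]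
        gcongr
        exact S.E_add_le hbA hEtG
    _ = S.E G + δ := by rw [hV, S.E_Et t hG]; ring

lemma E_negPart_Et_le_zero {X : Ω → ℝ} (hX : X ∈ S.H) {t : ℕ} (hI : S.IndepOf X t)
    (hz : S.E X = 0) (hr : (∃ c : ℝ, ∀ ω, c ≤ X ω) ∨ S.InLb1 X) :
    S.E (fun ω => max (-S.Et t X ω) 0) ≤ 0 := by
  rcases hr with ⟨c, hc⟩ | hLb
  · simpa [S.E_zero] using S.E_negPart_Et_le hX hI hz (abs_nonneg c) (S.const_mem 0)
      (fun _ => le_rfl) fun ω => by linarith [neg_abs_le c, hc ω]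
  · refine ge_of_tendsto hLb (Eventually.of_forall fun n => ?_)
    have hg : (fun ω => if (n : ℝ) < |X ω| then |X ω| else 0) ∈ S.H := by
      convert S.indmul_mem {ω | (n : ℝ) < |X ω|}
        (measurableSet_lt measurable_const (S.H_meas X hX).abs) _ (S.abs_mem X hX) using 1
      funext ω; simp [Set.indicator_apply]
    refine S.E_negPart_Et_le hX hI hz n.cast_nonneg hg (fun ω => by split_ifs <;> positivity)
      fun ω => ?_
    split_ifs with h
    · linarith [neg_abs_le (X ω), (n.cast_nonneg : (0 : ℝ) ≤ n)]
    · linarith [neg_abs_le (X ω), not_lt.mp h]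

lemma E_abs_Et_le_zero {X : Ω → ℝ} (hX : X ∈ S.H) {t : ℕ} (hI : S.IndepOf X t)
    (hz : S.E X = 0) (hr : (∃ c : ℝ, ∀ ω, c ≤ X ω) ∨ S.InLb1 X) :
    S.E (fun ω => |S.Et t X ω|) ≤ 0 := by
  have hW := S.Et_mem t X hX
  have hsplit : (fun ω => |S.Et t X ω|) =
      (fun ω => max (S.Et t X ω) 0) + fun ω => max (-S.Et t X ω) 0 := by
    funext ω; exact (max_zero_add_max_neg_zero_eq_abs_self _).symm
  have hneg : (fun ω => max (-S.Et t X ω) 0) ∈ S.H := S.posPart_mem (S.neg_mem hW)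
  rw [hsplit]
  linarith [S.E_add_le (S.posPart_mem hW) hneg,
    S.E_posPart_Et_le_zero hX hI hz, S.E_negPart_Et_le_zero hX hI hz hr]

lemma qs_Et_eq_of_E_abs_Et_increment_le_zero {Y D : ℕ → Ω → ℝ} (hY : ∀ k, Y k ∈ S.H)
    (hYm : ∀ k, Measurable[S.F k] (Y k)) (hD : ∀ k, D (k + 1) ∈ S.H)
    (hYD : ∀ k, Y (k + 1) = D (k + 1) + Y k)
    (hDE : ∀ k, S.E (fun ω => |S.Et k (D (k + 1)) ω|) ≤ 0) {n m : ℕ} (hnm : n ≤ m) :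
    S.QS fun ω => S.Et n (Y m) ω = Y n ω := by
  have hDabs : ∀ k, (fun ω => |S.Et k (D (k + 1)) ω|) ∈ S.H := fun k =>
    S.abs_mem _ (S.Et_mem k _ (hD k))
  set g := fun ω => ∑ k ∈ Finset.Ico n m, S.Et n (fun ω => |S.Et k (D (k + 1)) ω|) ω
  have hg : g ∈ S.H := S.sum_mem fun k _ => S.Et_mem n _ (hDabs k)
  have hg0 : ∀ ω, 0 ≤ g ω := fun ω =>
    Finset.sum_nonneg fun k _ => S.Et_nonneg n (hDabs k) (fun _ => abs_nonneg _) ω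
  have hEg : S.E g ≤ 0 :=
    (S.E_sum_le fun k _ => S.Et_mem n _ (hDabs k)).trans
      (Finset.sum_nonpos fun k _ => S.E_Et n (hDabs k) ▸ hDE k)
  refine (S.qs_nonpos_of_E_nonpos hg hg0 hEg).mono fun ω hω => ?_
  exact sub_eq_zero.mp (abs_nonpos_iff.mp ((S.abs_Et_sub_le_sum hY hYm hD hYD hnm ω).trans hω))

end Nonempty

end CondSLExp

/-- if `X_i ∈ H_i`, `X_i` is independent of `F_{i-1}`, each `X_i` is lower
bounded or in `L_b¹`, and `E(X_i) = 0` for all `i`, then the partial sums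
`S_j = X_1 + ⋯ + X_j` form an `SL`-martingale: `E_n(S_m) = S_n` (q.s.) for all `n ≤ m`. -/
theorem partialSums_slMartingale (S : CondSLExp Ω) (X : ℕ → Ω → ℝ)
    (hmem : ∀ i, 1 ≤ i → X i ∈ S.H)
    (hadapt : ∀ i, 1 ≤ i → Measurable[S.F i] (X i))
    (hind : ∀ i, 1 ≤ i → S.IndepOf (X i) (i - 1))
    (hreg : ∀ i, 1 ≤ i → ((∃ c : ℝ, ∀ ω, c ≤ X i ω) ∨ S.InLb1 (X i)))
    (hzero : ∀ i, 1 ≤ i → S.E (X i) = 0) :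
    ∀ n m : ℕ, n ≤ m →
      S.QS fun ω =>
        S.Et n (fun ω' => ∑ i ∈ Finset.Icc 1 m, X i ω') ω =
          ∑ i ∈ Finset.Icc 1 n, X i ω := by
  intro n m hnm
  rcases isEmpty_or_nonempty Ω with hΩ | hΩ
  · exact S.qs_of_forall isEmptyElim
  have hY : ∀ k, (fun ω => ∑ i ∈ Finset.Icc 1 k, X i ω) ∈ S.H := fun k =>
    S.sum_mem fun i hi => hmem i (Finset.mem_Icc.mp hi).1
  have hYm : ∀ k, Measurable[S.F k] fun ω => ∑ i ∈ Finset.Icc 1 k, X i ω := fun k =>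
    Finset.measurable_sum _ fun i hi =>
      (hadapt i (Finset.mem_Icc.mp hi).1).mono (S.F_mono (Finset.mem_Icc.mp hi).2) le_rfl
  have hYX : ∀ k, (fun ω => ∑ i ∈ Finset.Icc 1 (k + 1), X i ω) =
      X (k + 1) + fun ω => ∑ i ∈ Finset.Icc 1 k, X i ω := fun k => by
    funext ω; simp [Finset.sum_Icc_succ_top, add_comm]
  refine S.qs_Et_eq_of_E_abs_Et_increment_le_zero hY hYm (fun k => hmem _ k.succ_pos) hYX
    (fun k => ?_) hnm
  simpa using S.E_abs_Et_le_zero (hmem _ k.succ_pos) (hind _ k.succ_pos) (hzero _ k.succ_pos)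
    (hreg _ k.succ_pos)
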